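/- arXiv:0805.2340 — 3 statements merged into one kernel-verified Lean document; each statement's English description precedes it below -/
import Mathlib

section
/- Partial integration formula in word form (Lemma 3.1). For every n ≥ 0 and letters a_1, …, a_{n+1} ∈ A, the following identity holds in ℝ⟨A⟩: a_1 a_2 ⋯ a_{n+1} = Σ_{j=1}^{n+1} (−1)^{j−1} (a_1 ⋯ a_{n+1−j}) ⧢ (a_{n+1} a_n ⋯ a_{n+2−j}), where for j = n+1 the left factor is the empty word; that is, a_1⋯a_{n+1} = (a_1⋯a_n) ⧢ a_{n+1} − (a_1⋯a_{n−1}) ⧢ (a_{n+1}a_n) + ⋯ + (−1)^n a_{n+1}⋯a_1. -/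
/-!
Words over an alphabet `A` are elements of `List A`; the free noncommutative
algebra `ℝ⟨A⟩` is realised as the free `ℝ`-module `List A →₀ ℝ` with the words
as an `ℝ`-basis (a word `w` is the element `Finsupp.single w 1`, and
concatenation of words is list append).
-/

variable {A : Type*}

/-- The shuffle product of two words, valued in `ℝ⟨A⟩ = List A →₀ ℝ`:
`1 ⧢ w = w ⧢ 1 = w` and
`(a·u) ⧢ (b·v) = a·(u ⧢ (b·v)) + b·((a·u) ⧢ v)`,
where prepending a letter to every word of an element is `Finsupp.mapDomain (List.cons _)`. -/
noncomputable def shuffle : List A → List A → (List A →₀ ℝ)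
  | [], v => Finsupp.single v 1
  | u, [] => Finsupp.single u 1
  | a :: u, b :: v =>
      Finsupp.mapDomain (List.cons a) (shuffle u (b :: v)) +
        Finsupp.mapDomain (List.cons b) (shuffle (a :: u) v)
  termination_by u v => u.length + v.length

lemma shuffle_nil_left (v : List A) : shuffle ([] : List A) v = Finsupp.single v 1 := by
  cases v <;> simp [shuffle]

lemma shuffle_nil_right (u : List A) : shuffle u ([] : List A) = Finsupp.single u 1 := by
  cases u <;> simp [shuffle]

lemma shuffle_cons_cons (a b : A) (u v : List A) :
    shuffle (a :: u) (b :: v) =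
      Finsupp.mapDomain (List.cons a) (shuffle u (b :: v)) +
        Finsupp.mapDomain (List.cons b) (shuffle (a :: u) v) := by
  rw [shuffle]

lemma mapDomain_cons_append (c x : A) (P : List A →₀ ℝ) :
    Finsupp.mapDomain (List.cons c) (Finsupp.mapDomain (fun l => l ++ [x]) P) =
      Finsupp.mapDomain (fun l => l ++ [x]) (Finsupp.mapDomain (List.cons c) P) := by
  rw [← Finsupp.mapDomain_comp, ← Finsupp.mapDomain_comp]
  rfl

lemma shuffle_append_singleton : ∀ (u v : List A) (x y : A),
    shuffle (u ++ [x]) (v ++ [y]) =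
      Finsupp.mapDomain (fun l => l ++ [x]) (shuffle u (v ++ [y])) +
        Finsupp.mapDomain (fun l => l ++ [y]) (shuffle (u ++ [x]) v)
  | [], [], x, y => by
      simp only [List.nil_append, shuffle_cons_cons, shuffle_nil_left, shuffle_nil_right,
        Finsupp.mapDomain_single, List.cons_append]
      rw [add_comm]
  | [], c :: v, x, y => by
      have ih := shuffle_append_singleton ([] : List A) v x y
      simp only [List.nil_append, List.cons_append] at ih ⊢
      rw [shuffle_cons_cons, shuffle_cons_cons, ih]
      simp only [shuffle_nil_left, Finsupp.mapDomain_add, Finsupp.mapDomain_single,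
        mapDomain_cons_append, List.cons_append]
      abel
  | c :: u, [], x, y => by
      have ih := shuffle_append_singleton u ([] : List A) x y
      simp only [List.nil_append, List.cons_append] at ih ⊢
      rw [shuffle_cons_cons, shuffle_cons_cons, ih]
      simp only [shuffle_nil_right, Finsupp.mapDomain_add, Finsupp.mapDomain_single,
        mapDomain_cons_append, List.cons_append]
      abel
  | c :: u, d :: v, x, y => by
      have ih1 := shuffle_append_singleton u (d :: v) x y
      have ih2 := shuffle_append_singleton (c :: u) v x y
      simp only [List.cons_append] at ih1 ih2 ⊢
      rw [shuffle_cons_cons, ih1, ih2, shuffle_cons_cons c d u (v ++ [y]),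
        shuffle_cons_cons c d (u ++ [x]) v]
      simp only [Finsupp.mapDomain_add, mapDomain_cons_append]
      abel
  termination_by u v => u.length + v.length

lemma shuffle_key (u : List A) : ∀ (c : A) (s : List A),
    ∑ k ∈ Finset.range (u.length + 1),
        (-1 : ℝ) ^ (u.length - k) •
          shuffle ((u ++ c :: s).take k) (((u ++ c :: s).drop k).reverse) =
      Finsupp.mapDomain (fun l => l ++ [c]) (shuffle u s.reverse) := by
  induction u using List.reverseRecOn with
  | nil =>
      intro c s
      simp [shuffle_nil_left, Finsupp.mapDomain_single]
  | append_singleton u d ih =>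
      intro c s
      have hlen : (u ++ [d]).length = u.length + 1 := by simp
      have hword : (u ++ [d]) ++ c :: s = u ++ d :: (c :: s) := by simp
      rw [hlen, hword, Finset.sum_range_succ]
      have hsum : ∀ k ∈ Finset.range (u.length + 1),
          (-1 : ℝ) ^ (u.length + 1 - k) •
              shuffle ((u ++ d :: (c :: s)).take k) (((u ++ d :: (c :: s)).drop k).reverse) =
            -((-1 : ℝ) ^ (u.length - k) •
              shuffle ((u ++ d :: (c :: s)).take k) (((u ++ d :: (c :: s)).drop k).reverse)) := by
        intro k hk
        rw [Finset.mem_range] at hk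
        have : u.length + 1 - k = (u.length - k) + 1 := by omega
        rw [this, pow_succ, mul_neg_one, neg_smul]
      rw [Finset.sum_congr rfl hsum, Finset.sum_neg_distrib, ih d (c :: s)]
      have htake : (u ++ d :: (c :: s)).take (u.length + 1) = u ++ [d] := by
        rw [show u ++ d :: (c :: s) = (u ++ [d]) ++ (c :: s) by simp, ← hlen, List.take_left]
      have hdrop : (u ++ d :: (c :: s)).drop (u.length + 1) = c :: s := by
        rw [show u ++ d :: (c :: s) = (u ++ [d]) ++ (c :: s) by simp, ← hlen, List.drop_left]
      rw [htake, hdrop, Nat.sub_self, pow_zero, one_smul, List.reverse_cons,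
        shuffle_append_singleton]
      abel

/-- The bilinear extension of the shuffle product to all of `ℝ⟨A⟩`. -/
noncomputable def shP (P Q : List A →₀ ℝ) : List A →₀ ℝ :=
  P.sum fun u cu => Q.sum fun v cv => (cu * cv) • shuffle u v

/-- The shuffle product `u₁ ⧢ u₂ ⧢ ⋯ ⧢ u_k` of a finite list of words
(the empty shuffle being the empty word, the unit of the shuffle algebra). -/
noncomputable def shuffleList (L : List (List A)) : List A →₀ ℝ :=
  L.foldr (fun u acc => shP (Finsupp.single u 1) acc) (Finsupp.single [] 1)

/-- The unsigned reversal `ρ`, with `ρ(a₁⋯aₙ) = aₙ⋯a₁` on words, extended linearly. -/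
noncomputable def rho (P : List A →₀ ℝ) : List A →₀ ℝ :=
  Finsupp.mapDomain List.reverse P

/-- The signed reversal `α`, with `α(a₁⋯aₙ) = (-1)ⁿ aₙ⋯a₁` on words, extended linearly. -/
noncomputable def alphaMap (P : List A →₀ ℝ) : List A →₀ ℝ :=
  P.sum fun w c => Finsupp.single w.reverse ((-1 : ℝ) ^ w.length * c)

/-- `D w = Σ_{k=1}^{|w|} (−1)^{k−1} Σ_{u₁⋯u_k = w, each uᵢ nonempty} u₁ ⧢ ⋯ ⧢ u_k`:
the ordered decompositions of `w` into `k` nonempty factors are parametrised by the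
compositions `c` of `|w|` with `c.length = k`, the factors being
`w.splitWrtComposition c`. -/
noncomputable def D (w : List A) : List A →₀ ℝ :=
  ∑ c : Composition w.length,
    ((-1 : ℝ)) ^ (c.length - 1) • shuffleList (w.splitWrtComposition c)

/-- **Partial integration formula** (Lemma 3.1): for letters `a 0, …, a n` the word
`a₁⋯a_{n+1}` equals `Σ_{j=1}^{n+1} (−1)^{j−1} (a₁⋯a_{n+1−j}) ⧢ (a_{n+1}⋯a_{n+2−j})`
(below the summation index `j` runs over `0,…,n`, corresponding to `j+1` above). -/
theorem partial_integration_formula (n : ℕ) (a : Fin (n + 1) → A) :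
    Finsupp.single (List.ofFn a) (1 : ℝ) =
      ∑ j ∈ Finset.range (n + 1),
        ((-1 : ℝ)) ^ j •
          shuffle ((List.ofFn a).take (n - j)) (((List.ofFn a).drop (n - j)).reverse) := by
  set w := List.ofFn a with hw
  have hlen : w.length = n + 1 := by simp [hw]
  have hne : w ≠ [] := by intro h; rw [h] at hlen; simp at hlen
  rw [← Finset.sum_range_reflect]
  have hcongr : ∀ j ∈ Finset.range (n + 1),
      (-1 : ℝ) ^ (n + 1 - 1 - j) •
          shuffle (w.take (n - (n + 1 - 1 - j))) ((w.drop (n - (n + 1 - 1 - j))).reverse) =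
        (-1 : ℝ) ^ (n - j) • shuffle (w.take j) ((w.drop j).reverse) := by
    intro j hj
    rw [Finset.mem_range] at hj
    have h1 : n + 1 - 1 - j = n - j := by omega
    have h2 : n - (n - j) = j := by omega
    rw [h1, h2]
  rw [Finset.sum_congr rfl hcongr]
  obtain ⟨u, c, huc⟩ : ∃ u cc, w = u ++ [cc] :=
    ⟨w.dropLast, w.getLast hne, (List.dropLast_append_getLast hne).symm⟩
  have hul : u.length = n := by
    have := hlen; rw [huc] at this; simp at this; omega
  have := shuffle_key u c ([] : List A)
  rw [hul] at this
  simp only [List.reverse_nil] at this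
  rw [huc, this, shuffle_nil_right, Finsupp.mapDomain_single]
end

section
/- Shuffle with a single letter commutes with reversal up to sign (combinatorial core of the pairing lemma in Section 5): for every letter a ∈ A and every word w of length n over A, a ⧢ α(w) = (−1)^n ρ(a ⧢ w) in ℝ⟨A⟩, where α is the signed reversal and ρ is the unsigned reversal extended linearly. -/
/-!
Words over an alphabet `A` are elements of `List A`; the free noncommutative
algebra `ℝ⟨A⟩` is realised as the free `ℝ`-module `List A →₀ ℝ` with the words
as an `ℝ`-basis (a word `w` is the element `Finsupp.single w 1`, and
concatenation of words is list append).
-/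

variable {A : Type*}

lemma shuffle_single_eq (a : A) (w : List A) :
    shuffle [a] w =
      ∑ i ∈ Finset.range (w.length + 1),
        Finsupp.single (w.take i ++ a :: w.drop i) 1 := by
  induction w with
  | nil => simp [shuffle]
  | cons b v ih =>
    rw [shuffle]
    rw [Finset.sum_range_succ']
    simp only [List.take_succ_cons, List.drop_succ_cons, List.take_zero, List.drop_zero,
      List.nil_append]
    rw [shuffle, ih, Finsupp.mapDomain_single, Finsupp.mapDomain_finset_sum]
    simp only [Finsupp.mapDomain_single, List.cons_append]
    ring_nf
    rw [add_comm]
    simp only [List.length_cons]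
    rw [Nat.add_comm 1 v.length]

lemma rho_shuffle_single (a : A) (w : List A) :
    Finsupp.mapDomain List.reverse (shuffle [a] w) = shuffle [a] w.reverse := by
  rw [shuffle_single_eq, shuffle_single_eq, Finsupp.mapDomain_finset_sum]
  simp only [Finsupp.mapDomain_single, List.length_reverse]
  rw [← Finset.sum_range_reflect]
  apply Finset.sum_congr rfl
  intro i hi
  simp only [Finset.mem_range, Nat.lt_succ_iff] at hi
  congr 1
  rw [Nat.add_sub_cancel, List.take_reverse, List.drop_reverse]
  simp [List.reverse_append]

/-- **Shuffle with a single letter commutes with reversal up to sign** (combinatorial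
core of the pairing lemma in Section 5): for every letter `a` and word `w` of length
`n`, `a ⧢ α(w) = (−1)ⁿ ρ(a ⧢ w)`. -/
theorem letter_shuffle_alpha_eq_sign_rho (a : A) (w : List A) :
    shP (Finsupp.single [a] 1) (alphaMap (Finsupp.single w 1)) =
      ((-1 : ℝ)) ^ w.length • rho (shuffle [a] w) := by
  rw [alphaMap, Finsupp.sum_single_index (by simp)]
  rw [shP, Finsupp.sum_single_index (by simp),
    Finsupp.sum_single_index (by simp)]
  rw [rho, rho_shuffle_single]
  simp [mul_comm]
end

section
/- The matrix b(1/6) arising from the mean-square excess of the strong order one exponential Lie series (Magnus) integrator, namely the real symmetric 4×4 matrix b(1/6) = [[31/144, 5/72, 1/144, −1/24], [5/72, 1/36, 5/72, 0], [1/144, 5/72, 31/144, −1/24], [−1/24, 0, −1/24, 5/12]], has negative determinant; consequently it is not positive semidefinite and possesses a negative real eigenvalue. -/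
open Matrix

/-- The matrix `b(1/6)` arising from the mean-square excess of the strong order one
exponential Lie series (Magnus) integrator. -/
noncomputable def bSixth : Matrix (Fin 4) (Fin 4) ℝ :=
  !![31/144, 5/72, 1/144, -1/24;
     5/72, 1/36, 5/72, 0;
     1/144, 5/72, 31/144, -1/24;
     -1/24, 0, -1/24, 5/12]

namespace Matrix

theorem IsHermitian.exists_neg_hasEigenvalue_of_not_posSemidef {n : Type*} [Fintype n]
    [DecidableEq n] {A : Matrix n n ℝ} (hA : A.IsHermitian) (hA' : ¬A.PosSemidef) :
    ∃ μ : ℝ, μ < 0 ∧ Module.End.HasEigenvalue (toLin' A) μ := by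
  rw [posSemidef_iff_isHermitian_and_spectrum_nonneg, not_and, Set.not_subset] at hA'
  obtain ⟨μ, hμ, hμ_neg⟩ := hA' hA
  refine ⟨μ, lt_of_not_ge hμ_neg, ?_⟩
  rwa [Module.End.hasEigenvalue_iff_mem_spectrum, spectrum_toLin']

end Matrix

lemma bSixth_isHermitian : bSixth.IsHermitian := by
  ext i j
  fin_cases i <;> fin_cases j <;> simp [bSixth, conjTranspose_apply]

lemma bSixth_det : bSixth.det = -5 / 15552 := by
  simp [bSixth, det_succ_row_zero, Fin.sum_univ_succ, Fin.succAbove]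
  norm_num

/-- `b(1/6)` has negative determinant; consequently it is not positive semidefinite
(`xᵀ b(1/6) x ≥ 0` fails for some `x ∈ ℝ⁴`) and it possesses a negative real
eigenvalue. -/
theorem bSixth_det_neg_not_posSemidef :
    bSixth.det < 0 ∧
      ¬(∀ x : Fin 4 → ℝ, 0 ≤ x ⬝ᵥ bSixth.mulVec x) ∧
      ∃ μ : ℝ, μ < 0 ∧ Module.End.HasEigenvalue (Matrix.toLin' bSixth) μ := by
  have hdet : bSixth.det < 0 := by rw [bSixth_det]; norm_num
  have hpsd : ¬bSixth.PosSemidef := fun h ↦ hdet.not_ge h.det_nonneg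
  refine ⟨hdet, fun hx ↦ hpsd ?_,
    bSixth_isHermitian.exists_neg_hasEigenvalue_of_not_posSemidef hpsd⟩
  exact posSemidef_iff_dotProduct_mulVec.2 ⟨bSixth_isHermitian, by simpa using hx⟩
end
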